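/- arXiv:math/0409377 — 4 statements merged into one kernel-verified Lean document; each statement's English description precedes it below -/
import Mathlib

section
/- Let a and b be coprime integers with a ≠ 0. Then there exists an integer x such that a·x + b ≠ 0 and 8 does not divide φ(a·x + b). -/
/-!
The progression `a * x + b` contains a prime `p ≡ 3 (mod 4)` by Dirichlet's theorem, and then
`φ p = p - 1 ≡ 2 (mod 4)`, unless all of its terms are `≡ 1 (mod 4)`, i.e. `4 ∣ a` and
`b ≡ 1 (mod 4)`. In that case Dirichlet's theorem gives distinct primes `p ≡ -1` and `q ≡ -b`
modulo `a`; both are `≡ 3 (mod 4)`, `p * q ≡ b (mod a)` and `φ (p * q) = (p - 1) * (q - 1)` is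
`≡ 4 (mod 8)`.
-/

open Nat (totient)

lemma not_eight_dvd_totient_of_prime {p : ℕ} (hp : p.Prime) (hp4 : p % 4 = 3) :
    ¬ 8 ∣ totient p := by
  rw [Nat.totient_prime hp]
  omega

lemma not_eight_dvd_totient_mul_of_primes {p q : ℕ} (hp : p.Prime) (hq : q.Prime) (hpq : p ≠ q)
    (hp4 : p % 4 = 3) (hq4 : q % 4 = 3) : ¬ 8 ∣ totient (p * q) := by
  rw [Nat.totient_mul ((Nat.coprime_primes hp hq).mpr hpq), Nat.totient_prime hp,
    Nat.totient_prime hq]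
  obtain ⟨k, rfl⟩ : ∃ k, p = 4 * k + 3 := ⟨p / 4, by omega⟩
  obtain ⟨l, rfl⟩ : ∃ l, q = 4 * l + 3 := ⟨q / 4, by omega⟩
  have h : (4 * k + 3 - 1) * (4 * l + 3 - 1) = 8 * (2 * k * l + k + l) + 4 := by
    rw [show 4 * k + 3 - 1 = 4 * k + 2 by omega, show 4 * l + 3 - 1 = 4 * l + 2 by omega]
    ring
  omega

lemma Int.exists_prime_gt_modEq (N : ℕ) {m c : ℤ} (hm : m ≠ 0) (hc : IsCoprime c m) :
    ∃ p > N, p.Prime ∧ (p : ℤ) ≡ c [ZMOD m] := by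
  simpa only [Int.modEq_natAbs] using
    Nat.forall_exists_prime_gt_and_zmodEq N (Int.natAbs_ne_zero.mpr hm)
      (by rwa [Int.natCast_natAbs, IsCoprime.abs_right_iff])

lemma exists_modEq_emod_four_eq_three {a b : ℤ} (hab : IsCoprime a b)
    (h : ¬ (4 ∣ a ∧ b % 4 = 1)) : ∃ c, c ≡ b [ZMOD a] ∧ c % 4 = 3 := by
  have h_not_both_even : ¬ (2 ∣ a ∧ 2 ∣ b) := fun ⟨h2a, h2b⟩ ↦ by
    have := Int.isUnit_iff.mp (hab.isUnit_of_dvd' h2a h2b)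
    omega
  obtain ⟨x, hx⟩ : ∃ x : ℤ, (a * x + b) % 4 = 3 := by
    by_contra! hne
    have := hne 0; have := hne 1; have := hne 2; have := hne 3
    have ha4 : a % 4 = 0 ∨ a % 4 = 1 ∨ a % 4 = 2 ∨ a % 4 = 3 := by omega
    rcases ha4 with ha4 | ha4 | ha4 | ha4 <;> omega
  exact ⟨a * x + b, Int.modEq_iff_dvd.mpr ⟨-x, by ring⟩, hx⟩

lemma exists_prime_emod_four_eq_three_modEq {a b c : ℤ} (ha : a ≠ 0) (hab : IsCoprime a b)
    (hcb : c ≡ b [ZMOD a]) (hc4 : c % 4 = 3) :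
    ∃ p : ℕ, p.Prime ∧ p % 4 = 3 ∧ (p : ℤ) ≡ b [ZMOD a] := by
  have hca : IsCoprime c a := by
    obtain ⟨t, ht⟩ := Int.modEq_iff_dvd.mp hcb
    rw [show c = b + a * -t by linear_combination -ht]
    exact hab.symm.add_mul_left_left _
  have hc_four : IsCoprime c 4 := ⟨-1, c / 4 + 1, by omega⟩
  have hc : IsCoprime c (4 * a) := hc_four.mul_right hca
  obtain ⟨p, -, hp, hpc⟩ := Int.exists_prime_gt_modEq 0 (mul_ne_zero four_ne_zero ha) hc
  have hp4 : (p : ℤ) % 4 = c % 4 := hpc.of_mul_right a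
  exact ⟨p, hp, by omega, (hpc.of_mul_left 4).trans hcb⟩

lemma exists_primes_emod_four_eq_three_mul_modEq {a b : ℤ} (ha : a ≠ 0)
    (hab : IsCoprime a b) (h4a : 4 ∣ a) (hb4 : b % 4 = 1) :
    ∃ p q : ℕ, p.Prime ∧ q.Prime ∧ p ≠ q ∧ p % 4 = 3 ∧ q % 4 = 3 ∧
      ((p * q : ℕ) : ℤ) ≡ b [ZMOD a] := by
  obtain ⟨p, -, hp, hpa⟩ := Int.exists_prime_gt_modEq 0 ha isCoprime_one_left.neg_left
  obtain ⟨q, hqp, hq, hqa⟩ := Int.exists_prime_gt_modEq p ha hab.symm.neg_left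
  have hp4 : (p : ℤ) % 4 = -1 % 4 := hpa.of_dvd h4a
  have hq4 : (q : ℤ) % 4 = -b % 4 := hqa.of_dvd h4a
  refine ⟨p, q, hp, hq, hqp.ne, by omega, by omega, ?_⟩
  simpa using hpa.mul hqa

theorem stmt2 (a b : ℤ) (ha : a ≠ 0) (hab : IsCoprime a b) :
    ∃ x : ℤ, a * x + b ≠ 0 ∧ ¬ (8 ∣ Nat.totient (a * x + b).natAbs) := by
  obtain ⟨n, hn, hnb, h8⟩ :
      ∃ n : ℕ, n ≠ 0 ∧ (n : ℤ) ≡ b [ZMOD a] ∧ ¬ 8 ∣ totient n := by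
    by_cases h : 4 ∣ a ∧ b % 4 = 1
    · obtain ⟨p, q, hp, hq, hpq, hp4, hq4, hpqb⟩ :=
        exists_primes_emod_four_eq_three_mul_modEq ha hab h.1 h.2
      exact ⟨p * q, mul_ne_zero hp.ne_zero hq.ne_zero, hpqb,
        not_eight_dvd_totient_mul_of_primes hp hq hpq hp4 hq4⟩
    · obtain ⟨c, hcb, hc4⟩ := exists_modEq_emod_four_eq_three hab h
      obtain ⟨p, hp, hp4, hpb⟩ := exists_prime_emod_four_eq_three_modEq ha hab hcb hc4
      exact ⟨p, hp.ne_zero, hpb, not_eight_dvd_totient_of_prime hp hp4⟩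
  obtain ⟨x, hx⟩ := Int.modEq_iff_dvd.mp hnb.symm
  have hn_eq : a * x + b = n := by linear_combination -hx
  exact ⟨x, by rw [hn_eq]; exact_mod_cast hn, by rwa [hn_eq, Int.natAbs_natCast]⟩
end

section
/- Let a and b be coprime integers. Then the gcd of the set {φ(a·x + b) : x ∈ ℤ, a·x + b ≠ 0} divides 4. -/
/-- `g` is the greatest common divisor of the set `S` of naturals:
it divides every element, and every common divisor divides it. -/
def IsGcdOfSet (S : Set ℕ) (g : ℕ) : Prop :=
  (∀ n ∈ S, g ∣ n) ∧ ∀ d : ℕ, (∀ n ∈ S, d ∣ n) → d ∣ g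


lemma dirichlet_modEq (M : ℕ) [NeZero M] (u : ℕ) (hu : Nat.Coprime u M) (B : ℕ) :
    ∃ q, B < q ∧ q.Prime ∧ q ≡ u [MOD M] := by
  have hunit : IsUnit ((u : ZMod M)) := (ZMod.isUnit_iff_coprime u M).mpr hu
  obtain ⟨p, hp, hp2, hp3⟩ := Nat.forall_exists_prime_gt_and_eq_mod hunit B
  exact ⟨p, hp, hp2, (ZMod.natCast_eq_natCast_iff p u M).mp hp3⟩

lemma two_primes (M : ℕ) [NeZero M] (u v : ℕ) (hu : Nat.Coprime u M) (hv : Nat.Coprime v M) :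
    ∃ q1 q2 : ℕ, q1.Prime ∧ q2.Prime ∧ q1 ≠ q2 ∧ q1 ≡ u [MOD M] ∧ q2 ≡ v [MOD M] := by
  obtain ⟨q1, _, h1p, h1m⟩ := dirichlet_modEq M u hu 0
  obtain ⟨q2, hgt, h2p, h2m⟩ := dirichlet_modEq M v hv q1
  exact ⟨q1, q2, h1p, h2p, by omega, h1m, h2m⟩

lemma tot_two {q1 q2 : ℕ} (h1 : q1.Prime) (h2 : q2.Prime) (hne : q1 ≠ q2) :
    (q1 * q2).totient = (q1 - 1) * (q2 - 1) := by
  rw [Nat.totient_mul ((Nat.coprime_primes h1 h2).mpr hne), Nat.totient_prime h1,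
    Nat.totient_prime h2]

lemma coprime_of_modEq {x y n : ℕ} (h : x ≡ y [MOD n]) (hy : y.Coprime n) : x.Coprime n := by
  have : Nat.gcd n x = Nat.gcd n y := by rw [Nat.gcd_rec n x, Nat.gcd_rec n y, h]
  unfold Nat.Coprime
  rw [Nat.gcd_comm, this, Nat.gcd_comm]
  exact hy

lemma natModEq_dvd {x y A : ℕ} (h : x ≡ y [MOD A]) : (A : ℤ) ∣ (x : ℤ) - y :=
  (Int.ModEq.dvd (Int.natCast_modEq_iff.mpr h.symm))

/-- A prime congruent to `1` and to `2` mod `p` is absurd (for any `p` prime). -/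
lemma one_ne_two_mod {p q : ℕ} (pp : p.Prime) (hq : 2 ≤ q) (h1 : p ∣ q - 1)
    (h2 : q ≡ 2 [MOD p]) : False := by
  have e1 : (1 : ℕ) ≡ q [MOD p] := (Nat.modEq_iff_dvd' (by omega)).mpr h1
  have : (1 : ℕ) ≡ 2 [MOD p] := e1.trans h2
  have : p ∣ 1 := (Nat.modEq_iff_dvd' (by norm_num)).mp this
  exact pp.one_lt.ne' (Nat.dvd_one.mp this)

lemma odd_contra_two {A g β p : ℕ} [NeZero A] (pp : p.Prime) (hp2 : p ≠ 2)
    (hmemβ : ∀ n, 0 < n → n ≡ β [MOD A] → g ∣ n.totient)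
    (hβ : β.Coprime A) (hpA : ¬ p ∣ A) (hpg : p ∣ g) : False := by
  have hcop : A.Coprime p := Nat.coprime_comm.mp ((Nat.Prime.coprime_iff_not_dvd pp).mpr hpA)
  obtain ⟨u, hu1, hu2⟩ := Nat.chineseRemainder hcop β 2
  obtain ⟨v, hv1, hv2⟩ := Nat.chineseRemainder hcop 1 2
  have h2p : Nat.Coprime 2 p := (Nat.coprime_primes Nat.prime_two pp).mpr (Ne.symm hp2)
  haveI : NeZero (A * p) := ⟨Nat.mul_ne_zero (NeZero.ne A) pp.pos.ne'⟩
  have hu : u.Coprime (A * p) :=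
    Nat.Coprime.mul_right (coprime_of_modEq hu1 hβ) (coprime_of_modEq hu2 h2p)
  have hv : v.Coprime (A * p) :=
    Nat.Coprime.mul_right (coprime_of_modEq hv1 (Nat.coprime_one_left A))
      (coprime_of_modEq hv2 h2p)
  obtain ⟨q1, q2, h1p, h2pq, hne, h1m, h2m⟩ := two_primes (A * p) u v hu hv
  have hq1A : q1 ≡ β [MOD A] := (h1m.of_dvd ⟨p, rfl⟩).trans hu1
  have hq2A : q2 ≡ 1 [MOD A] := (h2m.of_dvd ⟨p, rfl⟩).trans hv1
  have hn : q1 * q2 ≡ β [MOD A] := by simpa using hq1A.mul hq2A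
  have hg1 : g ∣ (q1 - 1) * (q2 - 1) := by
    have := hmemβ (q1 * q2) (Nat.mul_pos h1p.pos h2pq.pos) hn
    rwa [tot_two h1p h2pq hne] at this
  have hq1p : q1 ≡ 2 [MOD p] := (h1m.of_dvd (dvd_mul_left p A)).trans hu2
  have hq2p : q2 ≡ 2 [MOD p] := (h2m.of_dvd (dvd_mul_left p A)).trans hv2
  rcases (Nat.Prime.dvd_mul pp).mp (hpg.trans hg1) with h | h
  · exact one_ne_two_mod pp h1p.two_le h hq1p
  · exact one_ne_two_mod pp h2pq.two_le h hq2p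

lemma eight_contra {A g β : ℕ} [NeZero A]
    (hmemβ : ∀ n, 0 < n → n ≡ β [MOD A] → g ∣ n.totient)
    (M : ℕ) [NeZero M] (u v : ℕ) (hu : u.Coprime M) (hv : v.Coprime M)
    (hu4 : u % 4 = 3) (hv4 : v % 4 = 3) (h4M : 4 ∣ M) (hAM : A ∣ M)
    (huv : u * v ≡ β [MOD A]) (h8 : 8 ∣ g) : False := by
  obtain ⟨q1, q2, h1p, h2p, hne, h1m, h2m⟩ := two_primes M u v hu hv
  have hq14 : q1 % 4 = 3 := by
    have := h1m.of_dvd h4M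
    unfold Nat.ModEq at this; omega
  have hq24 : q2 % 4 = 3 := by
    have := h2m.of_dvd h4M
    unfold Nat.ModEq at this; omega
  have hn : q1 * q2 ≡ β [MOD A] := ((h1m.of_dvd hAM).mul (h2m.of_dvd hAM)).trans huv
  have hg1 : g ∣ (q1 - 1) * (q2 - 1) := by
    have := hmemβ (q1 * q2) (Nat.mul_pos h1p.pos h2p.pos) hn
    rwa [tot_two h1p h2p hne] at this
  obtain ⟨s, hs⟩ : ∃ s, q1 - 1 = 2 * (2 * s + 1) := ⟨q1 / 4, by omega⟩
  obtain ⟨t, ht⟩ : ∃ t, q2 - 1 = 2 * (2 * t + 1) := ⟨q2 / 4, by omega⟩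
  have key : (q1 - 1) * (q2 - 1) = 4 * ((2 * s + 1) * (2 * t + 1)) := by
    rw [hs, ht]; ring
  obtain ⟨k, hk⟩ := h8.trans hg1
  rw [key] at hk
  set m := (2 * s + 1) * (2 * t + 1) with hm
  have hmo : m % 2 = 1 := by
    have e1 : (2 * s + 1) % 2 = 1 := by omega
    have e2 : (2 * t + 1) % 2 = 1 := by omega
    rw [hm, Nat.mul_mod, e1, e2]
  omega

theorem stmt3 (a b : ℤ) (hab : IsCoprime a b) (g : ℕ)
    (hg : IsGcdOfSet {n : ℕ | ∃ x : ℤ, a * x + b ≠ 0 ∧ n = Nat.totient (a * x + b).natAbs} g) :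
    g ∣ 4 := by
  obtain ⟨hdvd, -⟩ := hg
  by_cases ha : a = 0
  · subst ha
    have hb : IsUnit b := isCoprime_zero_left.mp hab
    have hmem : (1:ℕ) ∈ {n : ℕ | ∃ x : ℤ, 0 * x + b ≠ 0 ∧ n = Nat.totient (0 * x + b).natAbs} := by
      refine ⟨0, ?_, ?_⟩
      · simpa using hb.ne_zero
      · rcases Int.isUnit_iff.mp hb with rfl | rfl <;> simp
    exact (hdvd 1 hmem).trans (by norm_num)
  · set A := a.natAbs with hAdef
    have hA0 : A ≠ 0 := Int.natAbs_ne_zero.mpr ha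
    haveI : NeZero A := ⟨hA0⟩
    have hAb : IsCoprime (A:ℤ) b := by
      rcases Int.natAbs_eq a with h | h
      · rwa [← h]
      · rw [h] at hab
        exact (IsCoprime.neg_left_iff _ _).mp hab
    have hAne : ((A:ℤ)) ≠ 0 := by exact_mod_cast hA0
    -- membership lemma
    have hmem : ∀ n : ℕ, 0 < n → ((A:ℤ) ∣ (n:ℤ) - b ∨ (A:ℤ) ∣ (n:ℤ) + b) → g ∣ n.totient := by
      intro n hn hdv
      have hnz : ((n:ℤ)) ≠ 0 := by exact_mod_cast hn.ne'
      rcases hdv with h | h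
      · obtain ⟨x, hx⟩ := (Int.natAbs_dvd).mp h
        have he : a * x + b = (n:ℤ) := by linarith [hx]
        exact hdvd _ ⟨x, by rw [he]; exact hnz, by rw [he, Int.natAbs_natCast]⟩
      · obtain ⟨x, hx⟩ := (Int.natAbs_dvd).mp h
        have he : a * (-x) + b = -(n:ℤ) := by
          have : a * (-x) = -(a * x) := by ring
          rw [this]; linarith [hx]
        refine hdvd _ ⟨-x, by rw [he]; exact neg_ne_zero.mpr hnz, ?_⟩
        rw [he, Int.natAbs_neg, Int.natAbs_natCast]
    -- the residues β ≡ b, β' ≡ -b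
    set β : ℕ := (b % (A:ℤ)).toNat with hβdef
    set β' : ℕ := ((-b) % (A:ℤ)).toNat with hβ'def
    have hβcast : (β:ℤ) = b % (A:ℤ) := Int.toNat_of_nonneg (Int.emod_nonneg b hAne)
    have hβ'cast : (β':ℤ) = (-b) % (A:ℤ) := Int.toNat_of_nonneg (Int.emod_nonneg (-b) hAne)
    have hβb : (A:ℤ) ∣ (β:ℤ) - b := by
      rw [hβcast]
      have : b % (A:ℤ) - b = -((A:ℤ) * (b / A)) := by rw [Int.emod_def]; ring
      rw [this]
      exact dvd_neg.mpr (dvd_mul_right _ _)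
    have hβ'b : (A:ℤ) ∣ (β':ℤ) + b := by
      rw [hβ'cast]
      have : (-b) % (A:ℤ) + b = -((A:ℤ) * ((-b) / A)) := by rw [Int.emod_def]; ring
      rw [this]
      exact dvd_neg.mpr (dvd_mul_right _ _)
    have hββ' : (A:ℤ) ∣ (β:ℤ) + β' := by
      have h : ((β:ℤ) + β') = ((β:ℤ) - b) + ((β':ℤ) + b) := by ring
      rw [h]; exact dvd_add hβb hβ'b
    have hcop_of : ∀ (c : ℕ) (e : ℤ), IsCoprime (A:ℤ) e → (A:ℤ) ∣ (c:ℤ) - e → c.Coprime A := by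
      intro c e hce hd
      obtain ⟨k, hk⟩ := hd
      have h1 : IsCoprime (A:ℤ) (c:ℤ) := by
        have : (c:ℤ) = e + (A:ℤ) * k := by linarith [hk]
        rw [this]
        exact hce.add_mul_left_right k
      have h2 := Int.isCoprime_iff_gcd_eq_one.mp h1
      have h3 : Nat.gcd A c = 1 := by rwa [Int.gcd_natCast_natCast] at h2
      exact Nat.coprime_comm.mp h3
    have hβcop : β.Coprime A := hcop_of β b hAb hβb
    have hβ'cop : β'.Coprime A := hcop_of β' (-b) hAb.neg_right (by
      have : (β':ℤ) - (-b) = (β':ℤ) + b := by ring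
      rw [this]; exact hβ'b)
    have hmemβ : ∀ n, 0 < n → n ≡ β [MOD A] → g ∣ n.totient := by
      intro n hn h
      refine hmem n hn (Or.inl ?_)
      have e : (n:ℤ) - b = ((n:ℤ) - β) + ((β:ℤ) - b) := by ring
      rw [e]; exact dvd_add (natModEq_dvd h) hβb
    have hmemβ' : ∀ n, 0 < n → n ≡ β' [MOD A] → g ∣ n.totient := by
      intro n hn h
      refine hmem n hn (Or.inr ?_)
      have e : (n:ℤ) + b = ((n:ℤ) - β') + ((β':ℤ) + b) := by ring
      rw [e]; exact dvd_add (natModEq_dvd h) hβ'b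
    -- no odd prime divides g
    have h2 : ∀ p : ℕ, p.Prime → p ∣ g → p = 2 := by
      intro p pp hpg
      by_contra hp2
      by_cases hpA : p ∣ A
      · -- single prime suffices
        obtain ⟨c, hccop, hmemc, hcne⟩ : ∃ c : ℕ, c.Coprime A ∧
            (∀ n, 0 < n → n ≡ c [MOD A] → g ∣ n.totient) ∧ ¬(c ≡ 1 [MOD p]) := by
          by_cases hb1 : β ≡ 1 [MOD p]
          · refine ⟨β', hβ'cop, hmemβ', ?_⟩
            intro e2
            have d1 : (p:ℤ) ∣ (β:ℤ) - 1 := natModEq_dvd hb1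
            have d2 : (p:ℤ) ∣ (β':ℤ) - 1 := natModEq_dvd e2
            have d3 : (p:ℤ) ∣ (β:ℤ) + β' := dvd_trans (Int.natCast_dvd_natCast.mpr hpA) hββ'
            have hd2 : (p:ℤ) ∣ 2 := by
              have e : (2:ℤ) = ((β:ℤ) + β') - ((β:ℤ) - 1) - ((β':ℤ) - 1) := by ring
              rw [e]; exact dvd_sub (dvd_sub d3 d1) d2
            have : p ∣ 2 := by exact_mod_cast hd2
            exact hp2 ((Nat.prime_dvd_prime_iff_eq pp Nat.prime_two).mp this)
          · exact ⟨β, hβcop, hmemβ, hb1⟩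
        obtain ⟨q, -, hq, hqm⟩ := dirichlet_modEq A c hccop 1
        have hgq : g ∣ q - 1 := by
          have := hmemc q hq.pos hqm
          rwa [Nat.totient_prime hq] at this
        have hq1 : q ≡ 1 [MOD p] :=
          ((Nat.modEq_iff_dvd' (by have := hq.two_le; omega)).mpr (hpg.trans hgq)).symm
        exact hcne ((hqm.of_dvd hpA).symm.trans hq1)
      · exact odd_contra_two pp hp2 hmemβ hβcop hpA hpg
    -- 8 does not divide g
    have h8 : ¬ (8 ∣ g) := by
      intro h8
      have hoddA : 2 ∣ A → β % 2 = 1 := by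
        intro h2A
        by_contra h
        have h2β : 2 ∣ β := by omega
        have : (2:ℕ) ∣ 1 := by
          have := Nat.dvd_gcd h2β h2A
          rwa [hβcop] at this
        omega
      by_cases h4A : (4:ℕ) ∣ A
      · -- single prime with residue ≡ 3 mod 4
        have h2A : (2:ℕ) ∣ A := dvd_trans (by norm_num) h4A
        have hβodd : β % 2 = 1 := hoddA h2A
        have hsum : (4:ℕ) ∣ β + β' := by
          have h4 : (4:ℤ) ∣ (β:ℤ) + β' := dvd_trans (by exact_mod_cast h4A) hββ'
          exact_mod_cast (by push_cast at h4 ⊢; exact_mod_cast h4 : ((4:ℕ):ℤ) ∣ ((β + β' : ℕ):ℤ))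
        obtain ⟨c, hccop, hmemc, hc3⟩ : ∃ c : ℕ, c.Coprime A ∧
            (∀ n, 0 < n → n ≡ c [MOD A] → g ∣ n.totient) ∧ c % 4 = 3 := by
          by_cases hb4 : β % 4 = 3
          · exact ⟨β, hβcop, hmemβ, hb4⟩
          · refine ⟨β', hβ'cop, hmemβ', by omega⟩
        obtain ⟨q, -, hq, hqm⟩ := dirichlet_modEq A c hccop 1
        have hq4 : q % 4 = 3 := by
          have := hqm.of_dvd h4A
          unfold Nat.ModEq at this; omega
        have hgq : g ∣ q - 1 := by
          have := hmemc q hq.pos hqm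
          rwa [Nat.totient_prime hq] at this
        have h8q := h8.trans hgq
        have := hq.two_le
        omega
      · -- two primes ≡ 3 mod 4
        by_cases h2A : (2:ℕ) ∣ A
        · -- A = 2*T with T odd
          have hβodd : β % 2 = 1 := hoddA h2A
          set T := A / 2 with hTdef
          have hA2T : A = 2 * T := by omega
          have hTodd : T % 2 = 1 := by omega
          have hTne : T ≠ 0 := by omega
          haveI : NeZero (4 * T) := ⟨by omega⟩
          have hc2T : Nat.Coprime 2 T := by
            simp [Nat.coprime_two_left, Nat.odd_iff, hTodd]
          have hc4T : Nat.Coprime 4 T := by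
            rw [show (4:ℕ) = 2 ^ 2 from rfl]
            exact hc2T.pow_left 2
          obtain ⟨u, hu1, hu2⟩ := Nat.chineseRemainder hc4T 3 1
          obtain ⟨v, hv1, hv2⟩ := Nat.chineseRemainder hc4T 3 β
          have hβT : β.Coprime T := Nat.Coprime.coprime_dvd_right ⟨2, by omega⟩ hβcop
          have hu : u.Coprime (4 * T) :=
            Nat.Coprime.mul_right (coprime_of_modEq hu1 (by decide))
              (coprime_of_modEq hu2 (Nat.coprime_one_left T))
          have hv : v.Coprime (4 * T) :=
            Nat.Coprime.mul_right (coprime_of_modEq hv1 (by decide))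
              (coprime_of_modEq hv2 hβT)
          have hu4 : u % 4 = 3 := by unfold Nat.ModEq at hu1; omega
          have hv4 : v % 4 = 3 := by unfold Nat.ModEq at hv1; omega
          have huv : u * v ≡ β [MOD A] := by
            rw [hA2T]
            refine (Nat.modEq_and_modEq_iff_modEq_mul hc2T).mp ⟨?_, ?_⟩
            · show (u * v) % 2 = β % 2
              have eu : u % 2 = 1 := by omega
              have ev : v % 2 = 1 := by omega
              rw [Nat.mul_mod, eu, ev, hβodd]
            · simpa using hu2.mul hv2
          exact eight_contra hmemβ (4 * T) u v hu hv hu4 hv4 (dvd_mul_right 4 T)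
            ⟨2, by omega⟩ huv h8
        · -- A odd
          have hc2A : Nat.Coprime 2 A := by
            simp [Nat.coprime_two_left, Nat.odd_iff]
            omega
          have hc4A : Nat.Coprime 4 A := by
            rw [show (4:ℕ) = 2 ^ 2 from rfl]
            exact hc2A.pow_left 2
          haveI : NeZero (4 * A) := ⟨by omega⟩
          obtain ⟨u, hu1, hu2⟩ := Nat.chineseRemainder hc4A 3 1
          obtain ⟨v, hv1, hv2⟩ := Nat.chineseRemainder hc4A 3 β
          have hu : u.Coprime (4 * A) :=
            Nat.Coprime.mul_right (coprime_of_modEq hu1 (by decide))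
              (coprime_of_modEq hu2 (Nat.coprime_one_left A))
          have hv : v.Coprime (4 * A) :=
            Nat.Coprime.mul_right (coprime_of_modEq hv1 (by decide))
              (coprime_of_modEq hv2 hβcop)
          have hu4 : u % 4 = 3 := by unfold Nat.ModEq at hu1; omega
          have hv4 : v % 4 = 3 := by unfold Nat.ModEq at hv1; omega
          have huv : u * v ≡ β [MOD A] := by simpa using hu2.mul hv2
          exact eight_contra hmemβ (4 * A) u v hu hv hu4 hv4 (dvd_mul_right 4 A)
            (dvd_mul_left A 4) huv h8
    -- conclude
    have hg0 : g ≠ 0 := by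
      obtain ⟨x, hx⟩ : ∃ x : ℤ, a * x + b ≠ 0 := by
        by_cases hb : b = 0
        · exact ⟨1, by simp [hb, ha]⟩
        · exact ⟨0, by simpa using hb⟩
      have hd := hdvd _ ⟨x, hx, rfl⟩
      have hpos : 0 < ((a * x + b).natAbs).totient :=
        Nat.totient_pos.mpr (Int.natAbs_pos.mpr hx)
      intro h
      rw [h] at hd
      omega
    set k := g.factorization 2 with hk
    have hkd : 2 ^ k ∣ g := Nat.ordProj_dvd g 2
    have hk2 : k ≤ 2 := by
      by_contra hgt
      exact h8 (dvd_trans (pow_dvd_pow 2 (by omega : 3 ≤ k)) hkd)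
    have hcompl : g / 2 ^ k = 1 := by
      by_contra hne
      obtain ⟨p, pp, hpd⟩ := Nat.exists_prime_and_dvd hne
      have hpg : p ∣ g := hpd.trans (Nat.ordCompl_dvd g 2)
      have hp2 := h2 p pp hpg
      subst hp2
      exact Nat.not_dvd_ordCompl Nat.prime_two hg0 hpd
    have hgk : g = 2 ^ k := by
      have he := Nat.ordProj_mul_ordCompl_eq_self g 2
      rw [hcompl, mul_one] at he
      exact he.symm
    rw [hgk, show (4:ℕ) = 2 ^ 2 from rfl]
    exact pow_dvd_pow 2 hk2
end

section
/- Suppose a and b are coprime integers with a odd and a ≠ 0, ±1 such that b mod a ∉ {1, -1, 2, -2} (as residues). Then the gcd of {φ(a·x + b) : x ∈ ℤ} equals 2. -/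
/-!
Every `|a x + b|` is at least `3`, so every value `φ (a x + b)` is even. A prime
`p₀ ≡ b (mod a)` with `p₀ ≡ 3 (mod 4)` (Dirichlet) has `φ p₀ = p₀ - 1 ≡ 2 (mod 4)`, so `4 ∤ g`.
An odd prime `p ∣ g` is excluded by `n = q₁ q₂` with primes `q₁ ≡ -1` and `q₂ ≡ -b (mod a)`, both
`≡ -1 (mod p)`: then `p` divides neither factor of `φ n = (q₁ - 1) (q₂ - 1)`. When `p ∣ a` these
congruences are compatible because `p ∣ g ∣ p₀ - 1` forces `b ≡ 1 (mod p)`.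
-/

open scoped Nat

theorem Int.exists_modEq_and_modEq {m n : ℤ} (h : IsCoprime m n) (r s : ℤ) :
    ∃ c : ℤ, c ≡ r [ZMOD m] ∧ c ≡ s [ZMOD n] := by
  obtain ⟨u, v, huv⟩ := h
  refine ⟨s * (u * m) + r * (v * n), Int.modEq_iff_dvd.2 ⟨(r - s) * u, ?_⟩,
    Int.modEq_iff_dvd.2 ⟨(s - r) * v, ?_⟩⟩
  · linear_combination -r * huv
  · linear_combination -s * huv

theorem Int.ModEq.isCoprime {a b n : ℤ} (h : a ≡ b [ZMOD n]) (hb : IsCoprime b n) :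
    IsCoprime a n := by
  obtain ⟨t, rfl⟩ := Int.modEq_iff_add_fac.1 h.symm
  exact hb.add_mul_left_left t

theorem exists_prime_gt_modEq {N c : ℤ} (hN : N ≠ 0) (hc : IsCoprime c N) (M : ℕ) :
    ∃ q : ℕ, q.Prime ∧ M < q ∧ (q : ℤ) ≡ c [ZMOD N] := by
  obtain ⟨q, hMq, hq, hqc⟩ := Nat.forall_exists_prime_gt_and_zmodEq M
    (Int.natAbs_ne_zero.2 hN) (by rwa [Int.natCast_natAbs, IsCoprime.abs_right_iff])
  exact ⟨q, hq, hMq, Int.modEq_natAbs.1 hqc⟩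

theorem exists_prime_gt_modEq_modEq_of_isCoprime {m n r s : ℤ} (hm : m ≠ 0) (hn : n ≠ 0)
    (hmn : IsCoprime m n) (hr : IsCoprime r m) (hs : IsCoprime s n) (M : ℕ) :
    ∃ q : ℕ, q.Prime ∧ M < q ∧ (q : ℤ) ≡ r [ZMOD m] ∧ (q : ℤ) ≡ s [ZMOD n] := by
  obtain ⟨c, hcr, hcs⟩ := Int.exists_modEq_and_modEq hmn r s
  obtain ⟨q, hq, hMq, hqc⟩ :=
    exists_prime_gt_modEq (mul_ne_zero hm hn) ((hcr.isCoprime hr).mul_right (hcs.isCoprime hs)) M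
  exact ⟨q, hq, hMq, (hqc.of_mul_right n).trans hcr, (hqc.of_mul_left m).trans hcs⟩

theorem exists_prime_gt_modEq_modEq_of_prime {m r s : ℤ} {p : ℕ} (hm : m ≠ 0) (hp : p.Prime)
    (hr : IsCoprime r m) (hs : IsCoprime s p) (hrs : (p : ℤ) ∣ m → r ≡ s [ZMOD p]) (M : ℕ) :
    ∃ q : ℕ, q.Prime ∧ M < q ∧ (q : ℤ) ≡ r [ZMOD m] ∧ (q : ℤ) ≡ s [ZMOD p] := by
  by_cases hpm : (p : ℤ) ∣ m
  · obtain ⟨q, hq, hMq, hqr⟩ := exists_prime_gt_modEq hm hr M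
    exact ⟨q, hq, hMq, hqr, (hqr.of_dvd hpm).trans (hrs hpm)⟩
  · have hmp : IsCoprime m p := ((Nat.prime_iff_prime_int.1 hp).coprime_iff_not_dvd.2 hpm).symm
    exact exists_prime_gt_modEq_modEq_of_isCoprime hm (by exact_mod_cast hp.ne_zero) hmp hr hs M

theorem Nat.Prime.not_dvd_sub_one_of_modEq_neg_one {p q : ℕ} (hp : p.Prime) (hpodd : Odd p)
    (hq : 1 ≤ q) (h : (q : ℤ) ≡ -1 [ZMOD p]) : ¬ p ∣ q - 1 := by
  intro hpq
  have hsub : (p : ℤ) ∣ q - 1 := by exact_mod_cast Int.natCast_dvd_natCast.2 hpq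
  have hadd : (p : ℤ) ∣ q + 1 := by simpa using h.symm.dvd
  have htwo : (p : ℤ) ∣ 2 := by simpa using _root_.dvd_sub hadd hsub
  have hp2 : p = 2 := (Nat.prime_dvd_prime_iff_eq hp Nat.prime_two).1 (by exact_mod_cast htwo)
  exact Nat.not_even_iff_odd.2 hpodd (hp2 ▸ even_two)

theorem Nat.Prime.not_dvd_totient_mul_of_modEq_neg_one {p q₁ q₂ : ℕ} (hp : p.Prime)
    (hpodd : Odd p) (hq₁ : q₁.Prime) (hq₂ : q₂.Prime) (hne : q₁ ≠ q₂)
    (h₁ : (q₁ : ℤ) ≡ -1 [ZMOD p]) (h₂ : (q₂ : ℤ) ≡ -1 [ZMOD p]) : ¬ p ∣ φ (q₁ * q₂) := by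
  rw [Nat.totient_mul ((Nat.coprime_primes hq₁ hq₂).2 hne), Nat.totient_prime hq₁,
    Nat.totient_prime hq₂, hp.dvd_mul, not_or]
  exact ⟨hp.not_dvd_sub_one_of_modEq_neg_one hpodd hq₁.one_le h₁,
    hp.not_dvd_sub_one_of_modEq_neg_one hpodd hq₂.one_le h₂⟩

theorem exists_modEq_not_dvd_totient {m b : ℤ} {p : ℕ} (hm : m ≠ 0) (hb : IsCoprime b m)
    (hp : p.Prime) (hpodd : Odd p) (hpb : (p : ℤ) ∣ m → b ≡ 1 [ZMOD p]) :
    ∃ n : ℕ, (n : ℤ) ≡ b [ZMOD m] ∧ ¬ p ∣ φ n := by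
  have hunit : ∀ {k : ℤ}, IsCoprime (-1) k := isCoprime_one_left.neg_left
  obtain ⟨q₁, hq₁, -, hq₁m, hq₁p⟩ :=
    exists_prime_gt_modEq_modEq_of_prime hm hp hunit hunit (fun _ => .rfl) 0
  obtain ⟨q₂, hq₂, hq₁q₂, hq₂m, hq₂p⟩ :=
    exists_prime_gt_modEq_modEq_of_prime hm hp hb.neg_left hunit (fun h => (hpb h).neg) q₁
  refine ⟨q₁ * q₂, ?_, hp.not_dvd_totient_mul_of_modEq_neg_one hpodd hq₁ hq₂ hq₁q₂.ne hq₁p hq₂p⟩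
  simpa using hq₁m.mul hq₂m

theorem two_lt_natAbs_of_modEq {a b n : ℤ} (hab : IsCoprime a b) (hb1 : ¬ a ∣ b - 1)
    (hbm1 : ¬ a ∣ b + 1) (hb2 : ¬ a ∣ b - 2) (hbm2 : ¬ a ∣ b + 2) (hn : n ≡ b [ZMOD a]) :
    2 < n.natAbs := by
  have hdvd : a ∣ b - n := hn.dvd
  by_contra! h
  obtain ⟨h₁, h₂⟩ : -2 ≤ n ∧ n ≤ 2 := by omega
  interval_cases n
  · exact hbm2 (by simpa using hdvd)
  · exact hbm1 (by simpa using hdvd)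
  · exact hb1 (hab.isUnit_of_dvd' dvd_rfl (by simpa using hdvd)).dvd
  · exact hb1 hdvd
  · exact hb2 hdvd

theorem totient_mem_of_modEq {a b : ℤ} {n : ℕ} (h : (n : ℤ) ≡ b [ZMOD a]) :
    φ n ∈ {n : ℕ | ∃ x : ℤ, n = Nat.totient (a * x + b).natAbs} :=
  ⟨(n - b) / a, by rw [Int.mul_ediv_cancel' h.symm.dvd, sub_add_cancel, Int.natAbs_natCast]⟩

theorem stmt6_general (a b : ℤ) (hab : IsCoprime a b) (haodd : Odd a)
    (hb1 : ¬ a ∣ b - 1) (hbm1 : ¬ a ∣ b + 1) (hb2 : ¬ a ∣ b - 2) (hbm2 : ¬ a ∣ b + 2)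
    (g : ℕ)
    (hg : IsGcdOfSet {n : ℕ | ∃ x : ℤ, n = Nat.totient (a * x + b).natAbs} g) :
    g = 2 := by
  obtain ⟨hgS, hSg⟩ := hg
  have ha0 : a ≠ 0 := by rintro rfl; simp at haodd
  have two_dvd : 2 ∣ g := hSg 2 fun _ ⟨x, hx⟩ => hx ▸ (Nat.totient_even <|
    two_lt_natAbs_of_modEq hab hb1 hbm1 hb2 hbm2 (by simp [Int.ModEq])).two_dvd
  obtain ⟨p₀, hp₀, -, hp₀a, hp₀4⟩ :=
    exists_prime_gt_modEq_modEq_of_isCoprime ha0 (by norm_num : (4 : ℤ) ≠ 0)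
    (by simpa using (Int.isCoprime_two_right.2 haodd).pow_right (n := 2)) hab.symm
    (⟨-1, 1, by norm_num⟩ : IsCoprime (3 : ℤ) 4) 0
  have hgp₀ : g ∣ p₀ - 1 := Nat.totient_prime hp₀ ▸ hgS _ (totient_mem_of_modEq hp₀a)
  have hp₀4' : (p₀ - 1) % 4 = 2 := by
    have := hp₀.one_le; unfold Int.ModEq at hp₀4; omega
  obtain hg2 | hg2 : g = 2 ∨ 2 < g := by
    have := Nat.pos_of_dvd_of_pos hgp₀ (by omega); omega
  · exact hg2
  obtain h4 | ⟨p, hp, hpg, hpodd⟩ := Nat.four_dvd_or_exists_odd_prime_and_dvd_of_two_lt hg2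
  · have := h4.trans hgp₀; omega
  have hp₀p : (p₀ : ℤ) ≡ 1 [ZMOD p] :=
    (Int.natCast_modEq_iff.2 ((Nat.modEq_iff_dvd' hp₀.one_le).2 (hpg.trans hgp₀))).symm
  have hbp : (p : ℤ) ∣ a → b ≡ 1 [ZMOD p] := fun hpa => (hp₀a.of_dvd hpa).symm.trans hp₀p
  obtain ⟨n, hna, hpn⟩ := exists_modEq_not_dvd_totient ha0 hab.symm hp hpodd hbp
  exact absurd (hpg.trans (hgS _ (totient_mem_of_modEq hna))) hpn

theorem stmt6 (a b : ℤ) (hab : IsCoprime a b) (haodd : Odd a)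
    (ha0 : a ≠ 0) (ha1 : a ≠ 1) (ham1 : a ≠ -1)
    (hb1 : ¬ a ∣ b - 1) (hbm1 : ¬ a ∣ b + 1) (hb2 : ¬ a ∣ b - 2) (hbm2 : ¬ a ∣ b + 2)
    (g : ℕ)
    (hg : IsGcdOfSet {n : ℕ | ∃ x : ℤ, n = Nat.totient (a * x + b).natAbs} g) :
    g = 2 :=
  stmt6_general a b hab haodd hb1 hbm1 hb2 hbm2 g hg
end

section
/- Suppose a and b are coprime integers with 4 | a and b a square modulo a, with b not congruent to ±1 or ±2 modulo a. Then there exists an integer x such that a·x + b = p² for some prime p ≡ 3 (mod 4), and hence φ(a·x + b) = p(p-1) is not divisible by 4. -/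
theorem stmt7 (a b : ℤ) (hab : IsCoprime a b) (ha : 4 ∣ a)
    (hsq : ∃ c : ℤ, c ^ 2 ≡ b [ZMOD a])
    (hb1 : ¬ a ∣ b - 1) (hbm1 : ¬ a ∣ b + 1) (hb2 : ¬ a ∣ b - 2) (hbm2 : ¬ a ∣ b + 2) :
    ∃ (x : ℤ) (p : ℕ), p.Prime ∧ p % 4 = 3 ∧ a * x + b = (p : ℤ) ^ 2 ∧
      Nat.totient (a * x + b).natAbs = p * (p - 1) ∧
      ¬ (4 ∣ Nat.totient (a * x + b).natAbs) := by
  obtain ⟨c, hc⟩ := hsq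
  have hca : a ∣ c ^ 2 - b := Int.ModEq.dvd hc.symm
  have ha0 : a ≠ 0 := by
    rintro rfl
    rcases Int.isUnit_iff.mp (isCoprime_zero_left.mp hab) with rfl | rfl
    · exact hb1 (by simp)
    · exact hbm1 (by simp)
  have h4c : (4 : ℤ) ∣ c ^ 2 - b := dvd_trans ha hca
  have hbodd : b % 2 = 1 := by
    have h2a : (2 : ℤ) ∣ a := dvd_trans (by norm_num) ha
    obtain ⟨u, v, huv⟩ := hab
    rcases Int.emod_two_eq b with h | h
    · exfalso
      have : (2:ℤ) ∣ 1 := by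
        rw [← huv]
        exact dvd_add (Dvd.dvd.mul_left h2a u)
          (Dvd.dvd.mul_left (Int.dvd_of_emod_eq_zero h) v)
      norm_num at this
    · exact h
  have hcodd : c % 2 = 1 := by
    rcases Int.emod_two_eq c with h | h
    · exfalso
      obtain ⟨k, hk⟩ := Int.dvd_of_emod_eq_zero h
      obtain ⟨m, hm⟩ := h4c
      have hb4 : b = 4 * k ^ 2 - 4 * m := by linear_combination -hm + (c + 2*k) * hk
      omega
    · exact h
  -- choose r ≡ 3 mod 4 with r² ≡ b mod a
  set r : ℤ := if c % 4 = 3 then c else -c with hr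
  have hr4 : r % 4 = 3 := by
    rcases hr with _
    by_cases h : c % 4 = 3
    · simp [hr, h]
    · have : c % 4 = 1 := by omega
      simp only [hr, if_neg h]
      omega
  have hra : a ∣ r ^ 2 - b := by
    have : r ^ 2 = c ^ 2 := by
      by_cases h : c % 4 = 3 <;> simp [hr, h]
    rwa [this]
  -- r is coprime to a
  obtain ⟨k, hk⟩ := hra
  have hcop : IsCoprime a r := by
    have h2 : IsCoprime a (r ^ 2) := by
      have : r ^ 2 = b + a * k := by linarith
      rw [this]
      exact hab.add_mul_left_right k
    exact (IsCoprime.pow_right_iff (by norm_num)).mp h2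
  set n : ℕ := a.natAbs with hn
  haveI : NeZero n := ⟨Int.natAbs_ne_zero.mpr ha0⟩
  have hu : IsUnit ((r : ZMod n)) := by
    have hg : Nat.Coprime r.natAbs n := by
      have := Int.isCoprime_iff_gcd_eq_one.mp hcop
      unfold Int.gcd at this
      exact Nat.coprime_comm.mp this
    rcases Int.natAbs_eq r with h | h
    · rw [h, Int.cast_natCast]
      exact (ZMod.isUnit_iff_coprime _ _).mpr hg
    · rw [h, Int.cast_neg, Int.cast_natCast]
      exact ((ZMod.isUnit_iff_coprime _ _).mpr hg).neg
  obtain ⟨p, hpgt, hp, hpr⟩ := Nat.forall_exists_prime_gt_and_eq_mod hu 0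
  have hpr' : ((p : ℤ) : ZMod n) = ((r : ℤ) : ZMod n) := by push_cast; exact_mod_cast hpr
  have hdvd : (n : ℤ) ∣ r - (p : ℤ) := Int.ModEq.dvd ((ZMod.intCast_eq_intCast_iff _ _ _).mp hpr')
  have hdvd' : a ∣ (p : ℤ) - r := by
    rw [show (p:ℤ) - r = -(r - (p:ℤ)) by ring]
    exact (Int.natAbs_dvd.mp hdvd).neg_right
  -- p ≡ 3 mod 4
  have h4pr : (4 : ℤ) ∣ (p : ℤ) - r := dvd_trans ha hdvd'
  have hp4 : p % 4 = 3 := by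
    obtain ⟨j, hj⟩ := h4pr
    omega
  -- a divides p² - b
  have hpb : a ∣ (p : ℤ) ^ 2 - b := by
    rw [show (p:ℤ)^2 - b = ((p:ℤ) - r) * ((p:ℤ) + r) + (r^2 - b) by ring]
    exact dvd_add (hdvd'.mul_right _) ⟨k, hk⟩
  refine ⟨((p : ℤ) ^ 2 - b) / a, p, hp, hp4, ?_, ?_, ?_⟩
  · rw [Int.mul_ediv_cancel' hpb]; ring
  · rw [show a * (((p : ℤ) ^ 2 - b) / a) + b = (p:ℤ)^2 by rw [Int.mul_ediv_cancel' hpb]; ring]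
    rw [show ((p:ℤ)^2).natAbs = p ^ 2 by push_cast [Int.natAbs_pow]; rfl]
    rw [Nat.totient_prime_pow hp (by norm_num : 0 < 2)]
    ring
  · rw [show a * (((p : ℤ) ^ 2 - b) / a) + b = (p:ℤ)^2 by rw [Int.mul_ediv_cancel' hpb]; ring]
    rw [show ((p:ℤ)^2).natAbs = p ^ 2 by push_cast [Int.natAbs_pow]; rfl]
    rw [Nat.totient_prime_pow hp (by norm_num : 0 < 2)]
    intro hdvd4
    have hmod : (p ^ (2-1) * (p - 1)) % 4 = 2 := by
      have h1 : (p - 1) % 4 = 2 := by omega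
      rw [pow_one, Nat.mul_mod, hp4, h1]
    omega
end
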